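/- arXiv:1810.04301 — 5 statements merged into one kernel-verified Lean document; each statement's English description precedes it below -/
import Mathlib

section
/- Let Ā ∈ ℂ^{n×n}, F̄ ∈ ℂ^{n×m}, Ω̄ ∈ ℂ^{m×m}, C̄ ∈ ℂ^{p×n}, H̄ ∈ ℂ^{q×n} be complex matrices. Define the block matrices 𝒜 = [[Ā, −F̄],[0, Ω̄]] ∈ ℂ^{(n+m)×(n+m)} and 𝒞 = [[C̄, 0],[H̄, 0]] ∈ ℂ^{(p+q)×(n+m)}. Then the pair (𝒜, 𝒞) is detectable if and only if the following three conditions hold: (i) the pair (Ā, [C̄; H̄]) is detectable, where [C̄; H̄] ∈ ℂ^{(p+q)×n} denotes C̄ stacked on top of H̄; (ii) the pair (Ω̄, F̄) is detectable; and (iii) for every s ∈ ℂ with Re(s) ≥ 0 and all vectors z ∈ ℂⁿ, δ ∈ ℂᵐ satisfying Ω̄δ = sδ, C̄z = 0, H̄z = 0 and Āz − sz = F̄δ, one has F̄δ = 0. -/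
open Matrix

/-- A pair of matrices `(M, C)` is detectable if for every `s ∈ ℂ` with `Re(s) ≥ 0`,
the only vector `x` satisfying `M x = s x` and `C x = 0` is `x = 0`
(the Popov–Belevitch–Hautus criterion). -/
def Detectable {k r : Type} [Fintype k] (M : Matrix k k ℂ) (C : Matrix r k ℂ) : Prop :=
  ∀ s : ℂ, 0 ≤ s.re → ∀ x : k → ℂ, M.mulVec x = s • x → C.mulVec x = 0 → x = 0

theorem stmt_0 {n m p q : ℕ}
    (Abar : Matrix (Fin n) (Fin n) ℂ) (Fbar : Matrix (Fin n) (Fin m) ℂ)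
    (Ωbar : Matrix (Fin m) (Fin m) ℂ) (Cbar : Matrix (Fin p) (Fin n) ℂ)
    (Hbar : Matrix (Fin q) (Fin n) ℂ) :
    Detectable (Matrix.fromBlocks Abar (-Fbar) 0 Ωbar) (Matrix.fromBlocks Cbar 0 Hbar 0) ↔
      (Detectable Abar (Matrix.fromRows Cbar Hbar) ∧
       Detectable Ωbar Fbar ∧
       (∀ s : ℂ, 0 ≤ s.re → ∀ (z : Fin n → ℂ) (δ : Fin m → ℂ),
          Ωbar.mulVec δ = s • δ → Cbar.mulVec z = 0 → Hbar.mulVec z = 0 →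
          Abar.mulVec z - s • z = Fbar.mulVec δ → Fbar.mulVec δ = 0)) := by
  constructor
  · intro hD
    have key : ∀ s : ℂ, 0 ≤ s.re → ∀ (z : Fin n → ℂ) (δ : Fin m → ℂ),
        Abar.mulVec z - Fbar.mulVec δ = s • z → Ωbar.mulVec δ = s • δ →
        Cbar.mulVec z = 0 → Hbar.mulVec z = 0 → z = 0 ∧ δ = 0 := by
      intro s hs z δ h1 h2 h3 h4
      have h := hD s hs (Sum.elim z δ) ?_ ?_
      · constructor
        · funext i; exact congrFun h (Sum.inl i)
        · funext i; exact congrFun h (Sum.inr i)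
      · rw [Matrix.fromBlocks_mulVec]
        funext i
        cases i with
        | inl i =>
          simpa [Matrix.neg_mulVec, sub_eq_add_neg] using congrFun h1 i
        | inr i =>
          simpa using congrFun h2 i
      · rw [Matrix.fromBlocks_mulVec]
        funext i
        cases i with
        | inl i => simpa using congrFun h3 i
        | inr i => simpa using congrFun h4 i
    refine ⟨?_, ?_, ?_⟩
    · intro s hs x hMx hCx
      have hC : Cbar.mulVec x = 0 := by
        funext i; simpa using congrFun hCx (Sum.inl i)
      have hH : Hbar.mulVec x = 0 := by
        funext i; simpa using congrFun hCx (Sum.inr i)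
      exact (key s hs x 0 (by simpa using hMx) (by simp) hC hH).1
    · intro s hs δ hΩ hF
      exact (key s hs 0 δ (by simp [hF]) hΩ (by simp) (by simp)).2
    · intro s hs z δ hΩ hC hH hA
      have := (key s hs z δ (by rw [← hA]; abel) hΩ hC hH).2
      simp [this]
  · rintro ⟨h1, h2, h3⟩ s hs x hMx hCx
    set z := x ∘ Sum.inl with hz
    set δ := x ∘ Sum.inr with hδ
    rw [Matrix.fromBlocks_mulVec] at hMx hCx
    have eA : Abar.mulVec z - Fbar.mulVec δ = s • z := by
      funext i
      have := congrFun hMx (Sum.inl i)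
      simp [Matrix.neg_mulVec, sub_eq_add_neg] at this ⊢
      exact this
    have eΩ : Ωbar.mulVec δ = s • δ := by
      funext i
      have := congrFun hMx (Sum.inr i)
      simp at this ⊢
      exact this
    have eC : Cbar.mulVec z = 0 := by
      funext i; simpa using congrFun hCx (Sum.inl i)
    have eH : Hbar.mulVec z = 0 := by
      funext i; simpa using congrFun hCx (Sum.inr i)
    have hF : Fbar.mulVec δ = 0 := by
      refine h3 s hs z δ eΩ eC eH ?_
      rw [← eA]; abel
    have hδ0 : δ = 0 := h2 s hs δ eΩ hF
    have hz0 : z = 0 := by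
      refine h1 s hs z ?_ ?_
      · rw [← eA, hF]; abel
      · simp [Matrix.fromRows_mulVec, eC, eH]
    funext i
    cases i with
    | inl i => exact congrFun hz0 i
    | inr i => exact congrFun hδ0 i
end

section
/- Let Ā ∈ ℂ^{n×n}, F̄ ∈ ℂ^{n×m}, Ω̄ ∈ ℂ^{m×m}, C̄ ∈ ℂ^{p×n}, H̄ ∈ ℂ^{q×n} be complex matrices, and define 𝒜 = [[Ā, −F̄],[0, Ω̄]] and 𝒞 = [[C̄, 0],[H̄, 0]]. Assume: (i) the pair (Ā, [C̄; H̄]) is detectable, where [C̄; H̄] denotes C̄ stacked on top of H̄; (ii) the pair (Ω̄, F̄) is detectable; and (iii) for every s ∈ ℂ with Re(s) ≥ 0 and all z ∈ ℂⁿ, δ ∈ ℂᵐ with Ω̄δ = sδ, C̄z = 0, H̄z = 0 and Āz − sz = F̄δ, one has F̄δ = 0. Then the pair (𝒜, 𝒞) is detectable. -/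
/-!
Write an eigenvector of the block-triangular matrix as `(z, δ)`. The lower block row makes `δ`
an eigenvector of `Ω̄` for the same `s`, and the upper one gives `Āz - sz = F̄δ`. Since the output
only sees `z`, hypothesis (iii) kills `F̄δ`; detectability of `(Ω̄, F̄)` then forces `δ = 0`, after
which `z` is an eigenvector of `Ā` invisible to `[C̄; H̄]`, so `z = 0`.
-/

open Matrix

namespace Matrix

variable {k l r t R : Type*} [Fintype k] [Fintype l] [Semiring R]

theorem fromBlocks_zero_mulVec_eq_smul_iff {S : Type*} [SMul S R]
    (A : Matrix k k R) (B : Matrix k l R) (D : Matrix l l R) (s : S) (x : k ⊕ l → R) :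
    fromBlocks A B 0 D *ᵥ x = s • x ↔
      A *ᵥ (x ∘ Sum.inl) + B *ᵥ (x ∘ Sum.inr) = s • (x ∘ Sum.inl) ∧
        D *ᵥ (x ∘ Sum.inr) = s • (x ∘ Sum.inr) := by
  rw [fromBlocks_mulVec, zero_mulVec, zero_add, ← Sum.elim_comp_inl_inr (s • x), Sum.elim_eq_iff]
  rfl

theorem fromBlocks_zero_zero_mulVec (C : Matrix r k R) (H : Matrix t k R) (x : k ⊕ l → R) :
    fromBlocks C 0 H 0 *ᵥ x = fromRows C H *ᵥ (x ∘ Sum.inl) := by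
  rw [fromBlocks_mulVec, fromRows_mulVec]
  simp only [zero_mulVec, add_zero]

theorem fromRows_mulVec_eq_zero_iff (C : Matrix r k R) (H : Matrix t k R) (v : k → R) :
    fromRows C H *ᵥ v = 0 ↔ C *ᵥ v = 0 ∧ H *ᵥ v = 0 := by
  rw [fromRows_mulVec, ← Sum.elim_zero_zero, Sum.elim_eq_iff]

end Matrix

theorem stmt_1 {n m p q : ℕ}
    (Abar : Matrix (Fin n) (Fin n) ℂ) (Fbar : Matrix (Fin n) (Fin m) ℂ)
    (Ωbar : Matrix (Fin m) (Fin m) ℂ) (Cbar : Matrix (Fin p) (Fin n) ℂ)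
    (Hbar : Matrix (Fin q) (Fin n) ℂ)
    (h1 : Detectable Abar (Matrix.fromRows Cbar Hbar))
    (h2 : Detectable Ωbar Fbar)
    (h3 : ∀ s : ℂ, 0 ≤ s.re → ∀ (z : Fin n → ℂ) (δ : Fin m → ℂ),
        Ωbar.mulVec δ = s • δ → Cbar.mulVec z = 0 → Hbar.mulVec z = 0 →
        Abar.mulVec z - s • z = Fbar.mulVec δ → Fbar.mulVec δ = 0) :
    Detectable (Matrix.fromBlocks Abar (-Fbar) 0 Ωbar) (Matrix.fromBlocks Cbar 0 Hbar 0) := by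
  intro s hs x hx hCx
  obtain ⟨hz, hδ⟩ := (fromBlocks_zero_mulVec_eq_smul_iff _ _ _ _ _).mp hx
  replace hz : Abar *ᵥ (x ∘ Sum.inl) - s • (x ∘ Sum.inl) = Fbar *ᵥ (x ∘ Sum.inr) := by
    rw [← hz, neg_mulVec]; abel
  rw [fromBlocks_zero_zero_mulVec] at hCx
  obtain ⟨hCz, hHz⟩ := (fromRows_mulVec_eq_zero_iff _ _ _).mp hCx
  have hFδ : Fbar *ᵥ (x ∘ Sum.inr) = 0 := h3 s hs _ _ hδ hCz hHz hz
  have hδ0 : x ∘ Sum.inr = 0 := h2 s hs _ hδ hFδ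
  have hz0 : x ∘ Sum.inl = 0 := h1 s hs _ (by rwa [hFδ, sub_eq_zero] at hz) hCx
  rw [← Sum.elim_comp_inl_inr x, hz0, hδ0, Sum.elim_zero_zero]
end

section
/- Let Ā ∈ ℂ^{n×n}, F̄ ∈ ℂ^{n×m}, Ω̄ ∈ ℂ^{m×m}, C̄ ∈ ℂ^{p×n}, H̄ ∈ ℂ^{q×n} be complex matrices, and define 𝒜 = [[Ā, −F̄],[0, Ω̄]] and 𝒞 = [[C̄, 0],[H̄, 0]]. If the pair (𝒜, 𝒞) is detectable, then the pair (Ω̄, F̄) is detectable. -/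
open Matrix

/-! An unobservable unstable mode `x` of `(Ω, F)` lifts to the unobservable unstable mode `(0, x)`
of `(𝒜, 𝒞)`: the coupling block contributes `-F x = 0`, and `𝒞` ignores the second component. -/

theorem Matrix.fromBlocks_mulVec_sum_elim_zero {l m n o α : Type} [Fintype l] [Fintype m]
    [NonUnitalNonAssocSemiring α] (A : Matrix n l α) (B : Matrix n m α) (C : Matrix o l α)
    (D : Matrix o m α) (x : m → α) :
    fromBlocks A B C D *ᵥ Sum.elim 0 x = Sum.elim (B *ᵥ x) (D *ᵥ x) := by
  rw [fromBlocks_mulVec, Sum.elim_comp_inl, Sum.elim_comp_inr, mulVec_zero, mulVec_zero,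
    zero_add, zero_add]

theorem Detectable.of_neg_right {k r : Type} [Fintype k] {M : Matrix k k ℂ} {C : Matrix r k ℂ}
    (h : Detectable M (-C)) : Detectable M C :=
  fun s hs x hM hC => h s hs x hM (by rw [neg_mulVec, hC, neg_zero])

theorem Detectable.of_fromBlocks_zero_right {k l r t : Type} [Fintype k] [Fintype l]
    {A : Matrix k k ℂ} {B : Matrix k l ℂ} {D : Matrix l l ℂ} {C : Matrix r k ℂ}
    {H : Matrix t k ℂ} (h : Detectable (fromBlocks A B 0 D) (fromBlocks C 0 H 0)) :
    Detectable D B := by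
  intro s hs x hD hB
  have hlift : Sum.elim (0 : k → ℂ) x = 0 := by
    refine h s hs _ ?_ ?_
    · rw [fromBlocks_mulVec_sum_elim_zero, hB, hD]
      ext (i | i) <;> simp
    · rw [fromBlocks_mulVec_sum_elim_zero, zero_mulVec, zero_mulVec, Sum.elim_zero_zero]
  funext i
  simpa using congrFun hlift (Sum.inr i)

theorem stmt_3 {n m p q : ℕ}
    (Abar : Matrix (Fin n) (Fin n) ℂ) (Fbar : Matrix (Fin n) (Fin m) ℂ)
    (Ωbar : Matrix (Fin m) (Fin m) ℂ) (Cbar : Matrix (Fin p) (Fin n) ℂ)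
    (Hbar : Matrix (Fin q) (Fin n) ℂ)
    (hdet : Detectable (Matrix.fromBlocks Abar (-Fbar) 0 Ωbar)
      (Matrix.fromBlocks Cbar 0 Hbar 0)) :
    Detectable Ωbar Fbar :=
  hdet.of_fromBlocks_zero_right.of_neg_right
end

section
/- Consider a directed graph on the node set {1,…,N} with edge set E; for each node i let 𝐕ᵢ = {j : (j,i) ∈ E} denote the in-neighbours and qᵢ = #{j : (i,j) ∈ E} the out-degree of i. Let V₁,…,V_N : ℝ → ℝ be continuously differentiable with Vᵢ(t) ≥ 0 for all t ≥ 0, let g₁,…,g_N, w₁,…,w_N : [0,∞) → ℝ be continuous, let γ ∈ ℝ, and let α₁,…,α_N > 0, π₁,…,π_N > 0 satisfy qᵢπᵢ < 2αᵢ for every i. Suppose that for every i and every t ≥ 0, Vᵢ′(t) + 2αᵢVᵢ(t) + gᵢ(t) ≤ Σ_{j∈𝐕ᵢ} πⱼVⱼ(t) + γ²wᵢ(t). Then, with ρ = min_{1≤i≤N}(2αᵢ − qᵢπᵢ) > 0, for every T > 0 one has ∫₀ᵀ Σ_{i=1}^N ( gᵢ(t) + ρ Vᵢ(t) ) dt ≤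 Σ_{i=1}^N Vᵢ(0) + γ² ∫₀ᵀ Σ_{i=1}^N wᵢ(t) dt. -/
/-!
Summing the dissipation inequalities over all nodes, each `πⱼVⱼ` is counted once for every
out-neighbour of `j`, i.e. `qⱼ` times, so the coupling term is absorbed by `2αⱼVⱼ` up to
`(2αⱼ - qⱼπⱼ)Vⱼ ≥ ρVⱼ`. The total storage `F = Σ Vᵢ` then satisfies
`Σ (gᵢ + ρVᵢ) + F' ≤ γ² Σ wᵢ`; integrating over `[0, T]` and dropping `F(T) ≥ 0` gives the bound.
-/

open Finset

/-- The in-neighbourhood `𝐕ᵢ = {j : (j,i) ∈ E}` of node `i` in a digraph with edge set `E`. -/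
def inNbrs {N : ℕ} (E : Finset (Fin N × Fin N)) (i : Fin N) : Finset (Fin N) :=
  Finset.univ.filter (fun j => (j, i) ∈ E)

/-- The out-degree `qᵢ = #{j : (i,j) ∈ E}` of node `i` in a digraph with edge set `E`. -/
def outDeg {N : ℕ} (E : Finset (Fin N × Fin N)) (i : Fin N) : ℕ :=
  (Finset.univ.filter (fun j => (i, j) ∈ E)).card

theorem sum_sum_inNbrs_eq_sum_outDeg_nsmul {N : ℕ} {M : Type*} [AddCommMonoid M]
    (E : Finset (Fin N × Fin N)) (f : Fin N → M) :
    ∑ i, ∑ j ∈ inNbrs E i, f j = ∑ j, outDeg E j • f j := by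
  simp only [inNbrs, outDeg, sum_filter]
  rw [sum_comm]
  exact sum_congr rfl fun j _ => by rw [← sum_filter, sum_const]

theorem sum_add_mul_add_sum_le_of_dissipation {N : ℕ} (E : Finset (Fin N × Fin N))
    (v d g u α π : Fin N → ℝ) (ρ : ℝ) (hv : ∀ i, 0 ≤ v i)
    (hρ : ∀ i, ρ ≤ 2 * α i - (outDeg E i : ℝ) * π i)
    (hdiss : ∀ i, d i + 2 * α i * v i + g i ≤ (∑ j ∈ inNbrs E i, π j * v j) + u i) :
    ∑ i, (g i + ρ * v i) + ∑ i, d i ≤ ∑ i, u i := by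
  have hsum := sum_le_sum fun i (_ : i ∈ univ) => hdiss i
  have hρv : ∑ i, ρ * v i ≤ ∑ i, (2 * α i * v i - (outDeg E i : ℝ) * (π i * v i)) :=
    sum_le_sum fun i _ => by linear_combination mul_le_mul_of_nonneg_right (hρ i) (hv i)
  rw [sum_add_distrib, sum_add_distrib, sum_add_distrib,
    sum_sum_inNbrs_eq_sum_outDeg_nsmul] at hsum
  simp only [nsmul_eq_mul] at hsum
  rw [sum_sub_distrib] at hρv
  rw [sum_add_distrib]
  linarith

theorem integral_le_sub_add_integral_of_add_deriv_le {F F' f h : ℝ → ℝ} {a b : ℝ}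
    (hab : a ≤ b) (hF : ∀ x ∈ Set.Icc a b, HasDerivAt F (F' x) x)
    (hf : IntervalIntegrable f MeasureTheory.volume a b)
    (hh : IntervalIntegrable h MeasureTheory.volume a b)
    (hle : ∀ x ∈ Set.Ioo a b, f x + F' x ≤ h x) :
    ∫ x in a..b, f x ≤ F a - F b + ∫ x in a..b, h x := by
  have hFTC : F b - F a ≤ ∫ x in a..b, (h x - f x) :=
    intervalIntegral.sub_le_integral_of_hasDeriv_right_of_le hab
      (fun x hx => (hF x hx).continuousAt.continuousWithinAt)
      (fun x hx => (hF x (Set.Ioo_subset_Icc_self hx)).hasDerivWithinAt)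
      ((intervalIntegrable_iff_integrableOn_Icc_of_le hab).1 (hh.sub hf))
      (fun x hx => by linarith [hle x hx])
  rw [intervalIntegral.integral_sub hh hf] at hFTC
  linarith

theorem stmt_7_general {N : ℕ} (hN : 0 < N) (E : Finset (Fin N × Fin N))
    (V g w : Fin N → ℝ → ℝ) (γ : ℝ) (α π : Fin N → ℝ)
    (hVsmooth : ∀ i, ContDiff ℝ 1 (V i))
    (hVnonneg : ∀ i t, 0 ≤ t → 0 ≤ V i t)
    (hg : ∀ i, ContinuousOn (g i) (Set.Ici 0))
    (hw : ∀ i, ContinuousOn (w i) (Set.Ici 0))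
    (hqπ : ∀ i, (outDeg E i : ℝ) * π i < 2 * α i)
    (hdiss : ∀ i, ∀ t : ℝ, 0 ≤ t → deriv (V i) t + 2 * α i * V i t + g i t ≤
        (∑ j ∈ inNbrs E i, π j * V j t) + γ ^ 2 * w i t)
    (ρ : ℝ)
    (hρ : ρ = Finset.univ.inf' ⟨⟨0, hN⟩, Finset.mem_univ _⟩
        (fun i => 2 * α i - (outDeg E i : ℝ) * π i)) :
    (0 < ρ) ∧
      ∀ T : ℝ, 0 < T →
        (∫ t in (0:ℝ)..T, ∑ i, (g i t + ρ * V i t)) ≤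
          (∑ i, V i 0) + γ ^ 2 * ∫ t in (0:ℝ)..T, ∑ i, w i t := by
  have hρle : ∀ i, ρ ≤ 2 * α i - (outDeg E i : ℝ) * π i := fun i =>
    hρ ▸ inf'_le _ (mem_univ i)
  refine ⟨hρ ▸ (lt_inf'_iff _).2 fun i _ => by linarith [hqπ i], fun T hT => ?_⟩
  have hsub : Set.uIcc 0 T ⊆ Set.Ici (0 : ℝ) := by
    rw [Set.uIcc_of_le hT.le]
    exact Set.Icc_subset_Ici_self
  have hVderiv : ∀ i t, HasDerivAt (V i) (deriv (V i) t) t := fun i t =>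
    ((hVsmooth i).differentiable one_ne_zero t).hasDerivAt
  have hbound := integral_le_sub_add_integral_of_add_deriv_le (F := fun t => ∑ i, V i t)
    (f := fun t => ∑ i, (g i t + ρ * V i t))
    hT.le (fun t _ => HasDerivAt.fun_sum fun i _ => hVderiv i t)
    (ContinuousOn.intervalIntegrable <| continuousOn_finsetSum _ fun i _ =>
      ((hg i).mono hsub).add (continuousOn_const.mul (hVsmooth i).continuous.continuousOn))
    ((ContinuousOn.intervalIntegrable <|
      continuousOn_finsetSum _ fun i _ => (hw i).mono hsub).const_mul (γ ^ 2))
    (fun t ht => by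
      rw [mul_sum]
      exact sum_add_mul_add_sum_le_of_dissipation E _ _ _ _ α π ρ
        (fun i => hVnonneg i t ht.1.le) hρle (fun i => hdiss i t ht.1.le))
  have hVT : 0 ≤ ∑ i, V i T := sum_nonneg fun i _ => hVnonneg i T hT.le
  rw [intervalIntegral.integral_const_mul] at hbound
  linarith

theorem stmt_7 {N : ℕ} (hN : 0 < N) (E : Finset (Fin N × Fin N))
    (V g w : Fin N → ℝ → ℝ) (γ : ℝ) (α π : Fin N → ℝ)
    (hVsmooth : ∀ i, ContDiff ℝ 1 (V i))
    (hVnonneg : ∀ i t, 0 ≤ t → 0 ≤ V i t)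
    (hg : ∀ i, ContinuousOn (g i) (Set.Ici 0))
    (hw : ∀ i, ContinuousOn (w i) (Set.Ici 0))
    (hα : ∀ i, 0 < α i) (hπ : ∀ i, 0 < π i)
    (hqπ : ∀ i, (outDeg E i : ℝ) * π i < 2 * α i)
    (hdiss : ∀ i, ∀ t : ℝ, 0 ≤ t → deriv (V i) t + 2 * α i * V i t + g i t ≤
        (∑ j ∈ inNbrs E i, π j * V j t) + γ ^ 2 * w i t)
    (ρ : ℝ)
    (hρ : ρ = Finset.univ.inf' ⟨⟨0, hN⟩, Finset.mem_univ _⟩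
        (fun i => 2 * α i - (outDeg E i : ℝ) * π i)) :
    (0 < ρ) ∧
      ∀ T : ℝ, 0 < T →
        (∫ t in (0:ℝ)..T, ∑ i, (g i t + ρ * V i t)) ≤
          (∑ i, V i 0) + γ ^ 2 * ∫ t in (0:ℝ)..T, ∑ i, w i t :=
  stmt_7_general hN E V g w γ α π hVsmooth hVnonneg hg hw hqπ hdiss ρ hρ
end

section
/- Consider a directed graph on the node set {1,…,N} with edge set E; for each node i let 𝐕ᵢ = {j : (j,i) ∈ E} denote the in-neighbours and qᵢ = #{j : (i,j) ∈ E} the out-degree of i. Let V₁,…,V_N : ℝ → ℝ be differentiable with Vᵢ(t) ≥ 0 for all t ≥ 0, let g₁,…,g_N : [0,∞) → ℝ satisfy gᵢ(t) ≥ 0 for all t ≥ 0, and let α₁,…,α_N > 0, π₁,…,π_N > 0 satisfy qᵢπᵢ < 2αᵢ for every i. Suppose that for every i and every t ≥ 0, Vᵢ′(t) + 2αᵢVᵢ(t) + gᵢ(t) ≤ Σ_{j∈𝐕ᵢ} πⱼVⱼ(t) (the disturbance-free vector dissipation inequality). Then, with ρ = min_{1≤i≤N}(2αᵢ − qᵢπᵢ)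 > 0, the sum V(t) = Σ_{i=1}^N Vᵢ(t) decays exponentially: V(t) ≤ V(0)·e^{−ρt} for all t ≥ 0. -/
open Finset

/-!
Summing the dissipation inequalities over all nodes, node `j` appears on the right once for
each of its `qⱼ` out-neighbours, so `V = ∑ Vᵢ` satisfies
`V' ≤ ∑ (qᵢπᵢ - 2αᵢ) Vᵢ - ∑ gᵢ ≤ -ρ V` on `[0, ∞)`, using `Vᵢ, gᵢ ≥ 0`.
Grönwall's inequality then gives `V t ≤ V 0 · e^{-ρt}`.
-/

theorem sum_sum_inNbrs {N : ℕ} {R : Type*} [NonAssocSemiring R] (E : Finset (Fin N × Fin N))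
    (f : Fin N → R) : ∑ i, ∑ j ∈ inNbrs E i, f j = ∑ j, (outDeg E j : R) * f j := by
  simp only [inNbrs, sum_filter]
  rw [sum_comm]
  refine sum_congr rfl fun j _ => ?_
  rw [← sum_filter, sum_const, nsmul_eq_mul, outDeg]

theorem sum_le_neg_mul_sum_of_dissipation {N : ℕ} {E : Finset (Fin N × Fin N)}
    {α π x y z : Fin N → ℝ} {ρ : ℝ} (hx : ∀ i, 0 ≤ x i) (hz : ∀ i, 0 ≤ z i)
    (hρ : ∀ i, ρ ≤ 2 * α i - outDeg E i * π i)
    (hdiss : ∀ i, y i + 2 * α i * x i + z i ≤ ∑ j ∈ inNbrs E i, π j * x j) :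
    ∑ i, y i ≤ -ρ * ∑ i, x i := by
  have hsum : ∑ i, (y i + 2 * α i * x i + z i) ≤ ∑ i, (outDeg E i : ℝ) * (π i * x i) :=
    (sum_le_sum fun i _ => hdiss i).trans_eq (sum_sum_inNbrs E _)
  have hnode : ∑ i, ((outDeg E i : ℝ) * (π i * x i) - 2 * α i * x i) ≤ ∑ i, -ρ * x i :=
    sum_le_sum fun i _ => by nlinarith [hρ i, hx i]
  have hz_sum : 0 ≤ ∑ i, z i := sum_nonneg fun i _ => hz i
  simp only [sum_add_distrib, sum_sub_distrib, ← mul_sum] at hsum hnode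
  linarith

theorem le_mul_exp_of_deriv_le_mul {f : ℝ → ℝ} {K : ℝ} (hf : Differentiable ℝ f)
    (hbound : ∀ t, 0 ≤ t → deriv f t ≤ K * f t) {t : ℝ} (ht : 0 ≤ t) :
    f t ≤ f 0 * Real.exp (K * t) := by
  have := le_gronwallBound_of_liminf_deriv_right_le (f' := deriv f) (δ := f 0) (ε := 0)
    (a := 0) (b := t) hf.continuous.continuousOn
    (fun s _ _ hr => (hf s).hasDerivAt.hasDerivWithinAt.liminf_right_slope_le hr) le_rfl
    (fun s hs => by simpa using hbound s hs.1) t ⟨ht, le_rfl⟩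
  rwa [sub_zero, gronwallBound_ε0] at this

theorem stmt_8_general {N : ℕ} (hN : 0 < N) (E : Finset (Fin N × Fin N))
    (V g : Fin N → ℝ → ℝ) (α π : Fin N → ℝ)
    (hVdiff : ∀ i, Differentiable ℝ (V i))
    (hVnonneg : ∀ i t, 0 ≤ t → 0 ≤ V i t)
    (hg : ∀ i, ∀ t : ℝ, 0 ≤ t → 0 ≤ g i t)
    (hqπ : ∀ i, (outDeg E i : ℝ) * π i < 2 * α i)
    (hdiss : ∀ i, ∀ t : ℝ, 0 ≤ t → deriv (V i) t + 2 * α i * V i t + g i t ≤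
        ∑ j ∈ inNbrs E i, π j * V j t)
    (ρ : ℝ)
    (hρ : ρ = Finset.univ.inf' ⟨⟨0, hN⟩, Finset.mem_univ _⟩
        (fun i => 2 * α i - (outDeg E i : ℝ) * π i)) :
    (0 < ρ) ∧
      ∀ t : ℝ, 0 ≤ t → (∑ i, V i t) ≤ (∑ i, V i 0) * Real.exp (-ρ * t) := by
  have hρ_le : ∀ i, ρ ≤ 2 * α i - outDeg E i * π i := fun i =>
    hρ ▸ inf'_le _ (mem_univ i)
  refine ⟨hρ ▸ (lt_inf'_iff _).2 fun i _ => by linarith [hqπ i], fun t ht => ?_⟩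
  have hsum_diff : Differentiable ℝ fun s => ∑ i, V i s := fun s =>
    DifferentiableAt.fun_sum fun i _ => hVdiff i s
  refine le_mul_exp_of_deriv_le_mul hsum_diff (fun s hs => ?_) ht
  rw [deriv_fun_sum fun i _ => hVdiff i s]
  exact sum_le_neg_mul_sum_of_dissipation (fun i => hVnonneg i s hs) (fun i => hg i s hs)
    hρ_le fun i => hdiss i s hs

theorem stmt_8 {N : ℕ} (hN : 0 < N) (E : Finset (Fin N × Fin N))
    (V g : Fin N → ℝ → ℝ) (α π : Fin N → ℝ)
    (hVdiff : ∀ i, Differentiable ℝ (V i))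
    (hVnonneg : ∀ i t, 0 ≤ t → 0 ≤ V i t)
    (hg : ∀ i, ∀ t : ℝ, 0 ≤ t → 0 ≤ g i t)
    (hα : ∀ i, 0 < α i) (hπ : ∀ i, 0 < π i)
    (hqπ : ∀ i, (outDeg E i : ℝ) * π i < 2 * α i)
    (hdiss : ∀ i, ∀ t : ℝ, 0 ≤ t → deriv (V i) t + 2 * α i * V i t + g i t ≤
        ∑ j ∈ inNbrs E i, π j * V j t)
    (ρ : ℝ)
    (hρ : ρ = Finset.univ.inf' ⟨⟨0, hN⟩, Finset.mem_univ _⟩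
        (fun i => 2 * α i - (outDeg E i : ℝ) * π i)) :
    (0 < ρ) ∧
      ∀ t : ℝ, 0 ≤ t → (∑ i, V i t) ≤ (∑ i, V i 0) * Real.exp (-ρ * t) :=
  stmt_8_general hN E V g α π hVdiff hVnonneg hg hqπ hdiss ρ hρ
end
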